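/- (Approximate projection output guarantee.) In the setting of the Frank–Wolfe-style inner loop, with v̄ = (1/N)∑_{t=1}^N v_t, one has min_{s∈C} F(s, v̄) ≥ −δ where δ = ‖v*−v_1‖²/(νN) + 4ν. Equivalently, for all s ∈ C: ‖s − v̄‖² ≤ ‖s − z‖² + δ. -/

import Mathlib

/-!
Write `F(s, w) = ‖s - z‖² - ‖s - w‖²`, affine in `s` and concave in `w`. Since `v*` is the
projection of `z`, `F(s, v*) ≥ ‖z - v*‖² ≥ 0` on `C`. One step `v ↦ v + ν (s - v)` of the inner loop
decreases `‖v - v*‖²` by at least `ν (F(s, v*) - F(s, v)) - ν² ‖s - v‖²`, so the gaps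
`F(s_t, v*) - F(s_t, v_t)` telescope to a total of at most `‖v₁ - v*‖² / ν + 4 ν N`. As `s_t` minimises
`F(·, v_t)` over `C`, for every `s ∈ C` we get `F(s, v_t) ≥ F(s_t, v*) - gap_t ≥ -gap_t`, and
Jensen's inequality for the convex `w ↦ ‖s - w‖²` passes this to the average `v̄`.
-/

open Finset RealInnerProductSpace

section InnerProductSpace

variable {E : Type*} [NormedAddCommGroup E] [InnerProductSpace ℝ E]

theorem norm_sub_sq_sub_norm_sub_sq_le_of_inner_le {s s' w z : E}
    (h : ⟪s, w - z⟫ ≤ ⟪s', w - z⟫) :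
    ‖s - z‖ ^ 2 - ‖s - w‖ ^ 2 ≤ ‖s' - z‖ ^ 2 - ‖s' - w‖ ^ 2 := by
  simp only [norm_sub_sq_real, inner_sub_right] at h ⊢
  linarith

theorem norm_sub_sq_add_norm_sub_sq_le_of_forall_norm_sub_le {C : Set E} (hC : Convex ℝ C)
    {z p : E} (hp : p ∈ C) (hproj : ∀ w ∈ C, ‖p - z‖ ≤ ‖w - z‖) {w : E} (hw : w ∈ C) :
    ‖w - p‖ ^ 2 + ‖p - z‖ ^ 2 ≤ ‖w - z‖ ^ 2 := by
  have : Nonempty C := ⟨⟨p, hp⟩⟩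
  have hinf : ‖z - p‖ = ⨅ w : C, ‖z - (w : E)‖ := by
    refine le_antisymm (le_ciInf fun w ↦ ?_)
      (ciInf_le (f := fun w : C ↦ ‖z - (w : E)‖) ⟨0, ?_⟩ ⟨p, hp⟩)
    · simpa only [norm_sub_rev z] using hproj w w.2
    · rintro _ ⟨w, rfl⟩
      positivity
  have hobtuse := (norm_eq_iInf_iff_real_inner_le_zero hC hp).mp hinf w hw
  have hsplit : w - z = (w - p) - (z - p) := by abel
  rw [hsplit, norm_sub_sq_real (w - p), norm_sub_rev p z]
  linarith [real_inner_comm (w - p) (z - p)]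

theorem norm_sub_average_sq_le {ι : Type*} (S : Finset ι) (hS : S.Nonempty) (x : E)
    (v : ι → E) :
    ‖x - (#S : ℝ)⁻¹ • ∑ t ∈ S, v t‖ ^ 2 ≤ (#S : ℝ)⁻¹ * ∑ t ∈ S, ‖x - v t‖ ^ 2 := by
  have hconvex : ConvexOn ℝ Set.univ fun y : E ↦ ‖y‖ ^ 2 :=
    convexOn_univ_norm.pow (fun _ _ ↦ norm_nonneg _) 2
  have hcard : (#S : ℝ) ≠ 0 := by exact_mod_cast hS.card_pos.ne'
  have hweights : ∑ _t ∈ S, (#S : ℝ)⁻¹ = 1 := by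
    rw [sum_const, nsmul_eq_mul, mul_inv_cancel₀ hcard]
  have havg : ∑ t ∈ S, (#S : ℝ)⁻¹ • (x - v t) = x - (#S : ℝ)⁻¹ • ∑ t ∈ S, v t := by
    rw [← smul_sum, sum_sub_distrib, sum_const, ← Nat.cast_smul_eq_nsmul ℝ, smul_sub,
      inv_smul_smul₀ hcard]
  rw [← havg, mul_sum]
  exact hconvex.map_sum_le (fun _ _ ↦ by positivity) hweights (fun _ _ ↦ Set.mem_univ _)

end InnerProductSpace

section FrankWolfe

variable {E : Type*} [NormedAddCommGroup E] [InnerProductSpace ℝ E] {ν : ℝ} {s v : ℕ → E}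

theorem frankWolfe_iterate_mem {C : Set E} (hC : Convex ℝ C) (hν : 0 ≤ ν) (hν1 : ν ≤ 1)
    (hv1 : v 1 ∈ C) (hsC : ∀ t, s t ∈ C) (hupd : ∀ t, v (t + 1) = (1 - ν) • v t + ν • s t) :
    ∀ t, 1 ≤ t → v t ∈ C := by
  intro t ht
  induction t, ht using Nat.le_induction with
  | base => exact hv1
  | succ t _ ih => exact hupd t ▸ hC ih (hsC t) (by linarith) hν (by ring)

theorem frankWolfe_step_gap_le (u x y : E) (hν : 0 ≤ ν) :
    ν * (‖y - x‖ ^ 2 - ‖y - u‖ ^ 2) ≤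
      ‖x - u‖ ^ 2 - ‖(1 - ν) • x + ν • y - u‖ ^ 2 + ν ^ 2 * ‖y - x‖ ^ 2 := by
  have hstep : (1 - ν) • x + ν • y - u = (x - u) + ν • (y - x) := by module
  have hsplit : y - u = (y - x) + (x - u) := by abel
  rw [hstep, hsplit, norm_add_sq_real, norm_add_sq_real, norm_smul, real_inner_smul_right,
    Real.norm_of_nonneg hν, real_inner_comm]
  nlinarith [mul_nonneg hν (sq_nonneg ‖x - u‖)]

theorem frankWolfe_sum_gap_le (u : E) (N : ℕ) {D : ℝ} (hν : 0 ≤ ν)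
    (hupd : ∀ t, v (t + 1) = (1 - ν) • v t + ν • s t)
    (hD : ∀ t ∈ Icc 1 N, ‖s t - v t‖ ≤ D) :
    ν * ∑ t ∈ Icc 1 N, (‖s t - v t‖ ^ 2 - ‖s t - u‖ ^ 2) ≤ ‖v 1 - u‖ ^ 2 + N * (ν ^ 2 * D ^ 2) := by
  have hstep : ∀ t ∈ Icc 1 N, ν * (‖s t - v t‖ ^ 2 - ‖s t - u‖ ^ 2) ≤
      (‖v t - u‖ ^ 2 - ‖v (t + 1) - u‖ ^ 2) + ν ^ 2 * D ^ 2 := fun t ht ↦ by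
    have hsq : ‖s t - v t‖ ^ 2 ≤ D ^ 2 := pow_le_pow_left₀ (norm_nonneg _) (hD t ht) 2
    rw [hupd t]
    nlinarith [frankWolfe_step_gap_le u (v t) (s t) hν]
  have htelescope : ∑ t ∈ Icc 1 N, (‖v t - u‖ ^ 2 - ‖v (t + 1) - u‖ ^ 2) =
      ‖v 1 - u‖ ^ 2 - ‖v (N + 1) - u‖ ^ 2 := by
    rw [← neg_inj, ← sum_neg_distrib]
    simp only [neg_sub]
    rw [← Ico_add_one_right_eq_Icc]
    exact sum_Ico_sub (f := fun t ↦ ‖v t - u‖ ^ 2) (by omega)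
  calc ν * ∑ t ∈ Icc 1 N, (‖s t - v t‖ ^ 2 - ‖s t - u‖ ^ 2)
      ≤ ∑ t ∈ Icc 1 N, ((‖v t - u‖ ^ 2 - ‖v (t + 1) - u‖ ^ 2) + ν ^ 2 * D ^ 2) := by
        rw [mul_sum]
        exact sum_le_sum hstep
    _ = ‖v 1 - u‖ ^ 2 - ‖v (N + 1) - u‖ ^ 2 + N * (ν ^ 2 * D ^ 2) := by
        rw [sum_add_distrib, htelescope, sum_const, Nat.card_Icc, nsmul_eq_mul]
        simp
    _ ≤ ‖v 1 - u‖ ^ 2 + N * (ν ^ 2 * D ^ 2) := by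
        linarith [sq_nonneg ‖v (N + 1) - u‖]

end FrankWolfe

/-- Approximate projection output guarantee: the averaged iterate `v̄` is a
`δ`-approximate projection of `z` onto `C`. -/
theorem stmt13 (n N : ℕ) (hN : 0 < N) (C : Set (EuclideanSpace ℝ (Fin n)))
    (hconv : Convex ℝ C) (hball : ∀ v' ∈ C, ‖v'‖ ≤ 1)
    (z : EuclideanSpace ℝ (Fin n))
    (vstar : EuclideanSpace ℝ (Fin n)) (hvstarC : vstar ∈ C)
    (hproj : ∀ v' ∈ C, ‖vstar - z‖ ≤ ‖v' - z‖)
    (ν : ℝ) (hν : 0 < ν) (hν1 : ν ≤ 1)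
    (s v : ℕ → EuclideanSpace ℝ (Fin n)) (hv1 : v 1 ∈ C)
    (hsC : ∀ t, s t ∈ C)
    (hbest : ∀ t, ∀ s' ∈ C, (inner ℝ (s t) (v t - z) : ℝ) ≤ (inner ℝ s' (v t - z) : ℝ))
    (hupd : ∀ t, v (t + 1) = (1 - ν) • v t + ν • s t) :
    ∀ s' ∈ C,
      ‖s' - (N : ℝ)⁻¹ • ∑ t ∈ Icc 1 N, v t‖ ^ 2 ≤
        ‖s' - z‖ ^ 2 + (‖vstar - v 1‖ ^ 2 / (ν * N) + 4 * ν) := by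
  intro s' hs'
  have hvC := frankWolfe_iterate_mem hconv hν.le hν1 hv1 hsC hupd
  have hD : ∀ t ∈ Icc 1 N, ‖s t - v t‖ ≤ 2 := fun t ht ↦ by
    linarith [norm_sub_le (s t) (v t), hball _ (hsC t), hball _ (hvC t (mem_Icc.mp ht).1)]
  have hgap := frankWolfe_sum_gap_le vstar N hν.le hupd hD
  have hstep : ∀ t, ‖s' - v t‖ ^ 2 ≤ ‖s' - z‖ ^ 2 + (‖s t - v t‖ ^ 2 - ‖s t - vstar‖ ^ 2) :=
    fun t ↦ by
      linarith [norm_sub_sq_sub_norm_sub_sq_le_of_inner_le (hbest t s' hs'),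
        norm_sub_sq_add_norm_sub_sq_le_of_forall_norm_sub_le hconv hvstarC hproj (hsC t),
        sq_nonneg ‖vstar - z‖]
  have hcard : (#(Icc 1 N) : ℝ) = N := by simp
  have hJensen := norm_sub_average_sq_le (Icc 1 N) (nonempty_Icc.mpr hN) s' v
  rw [hcard] at hJensen
  calc ‖s' - (N : ℝ)⁻¹ • ∑ t ∈ Icc 1 N, v t‖ ^ 2
      ≤ (N : ℝ)⁻¹ * ∑ t ∈ Icc 1 N, (‖s' - z‖ ^ 2 + (‖s t - v t‖ ^ 2 - ‖s t - vstar‖ ^ 2)) :=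
        hJensen.trans (by gcongr with t; exact hstep t)
    _ = ‖s' - z‖ ^ 2 + (ν * N)⁻¹ * (ν * ∑ t ∈ Icc 1 N, (‖s t - v t‖ ^ 2 - ‖s t - vstar‖ ^ 2)) := by
        rw [sum_add_distrib, sum_const, ← hcard, nsmul_eq_mul]
        field_simp
    _ ≤ ‖s' - z‖ ^ 2 + (ν * N)⁻¹ * (‖v 1 - vstar‖ ^ 2 + N * (ν ^ 2 * 2 ^ 2)) := by gcongr
    _ = ‖s' - z‖ ^ 2 + (‖vstar - v 1‖ ^ 2 / (ν * N) + 4 * ν) := by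
        rw [norm_sub_rev (v 1)]
        field_simp
        ring
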